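/- Adjointness of the EAKF and ETKF transformations: let E be a d×M matrix, P = E Eᵀ, H a q×d matrix, R a symmetric positive definite q×q matrix. Define A = P^{1/2} (Id + P^{1/2} Hᵀ R^{-1} H P^{1/2})^{-1/2} (P^{1/2})^{+} and T = (Id_M + Eᵀ Hᵀ R^{-1} H E)^{-1/2}, where (P^{1/2})^{+} is the Moore–Penrose pseudo-inverse of P^{1/2}. Then A E = E T. -/

import Mathlib

/-!
Write `S = P^{1/2}` and let `G` be its pseudo-inverse. Since `S G` is the orthogonal
projection onto the range of `P = E Eᵀ`, which is the range of `E`, we get `S G E = E`, and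
transposing `S G S = S` gives `G E Eᵀ = G S S = S`. Hence `G E` intertwines
`1 + S Hᵀ R⁻¹ H S` with `1 + Eᵀ Hᵀ R⁻¹ H E`. Intertwining of two symmetric matrices passes to
any function of them, since on their finite spectra the function agrees with one interpolating
polynomial; applied to `x ↦ x^{-1/2}` this gives
`A E = S (1 + S Hᵀ R⁻¹ H S)^{-1/2} G E = S G E T = E T`.
-/

open Matrix

namespace Matrix.PosSemidef

open scoped ComplexOrder

noncomputable def sqrt {n : Type*} [Fintype n] [DecidableEq n] {𝕜 : Type*} [RCLike 𝕜]
    {A : Matrix n n 𝕜} (hA : PosSemidef A) : Matrix n n 𝕜 :=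
  hA.1.eigenvectorUnitary.1 * diagonal ((↑) ∘ (√·) ∘ hA.1.eigenvalues) *
    (star hA.1.eigenvectorUnitary : Matrix n n 𝕜)

end Matrix.PosSemidef

namespace Matrix

section Sqrt

open scoped ComplexOrder

variable {n 𝕜 : Type*} [Fintype n] [DecidableEq n] [RCLike 𝕜] {A : Matrix n n 𝕜}

theorem PosSemidef.sqrt_eq_cfc (hA : A.PosSemidef) : hA.sqrt = cfc Real.sqrt A := by
  rw [hA.1.cfc_eq, IsHermitian.cfc, Unitary.conjStarAlgAut_apply]
  rfl

theorem PosSemidef.nonneg_of_mem_spectrum (hA : A.PosSemidef) {x : ℝ}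
    (hx : x ∈ spectrum ℝ A) : 0 ≤ x := by
  obtain ⟨i, rfl⟩ := hA.1.spectrum_real_eq_range_eigenvalues ▸ hx
  exact hA.eigenvalues_nonneg i

theorem PosDef.pos_of_mem_spectrum (hA : A.PosDef) {x : ℝ} (hx : x ∈ spectrum ℝ A) :
    0 < x := by
  obtain ⟨i, rfl⟩ := hA.1.spectrum_real_eq_range_eigenvalues ▸ hx
  exact hA.eigenvalues_pos i

theorem PosSemidef.sqrt_mul_self (hA : A.PosSemidef) : hA.sqrt * hA.sqrt = A := by
  rw [hA.sqrt_eq_cfc, ← cfc_mul _ _ A, cfc_congr (g := id), cfc_id ℝ A hA.1.isSelfAdjoint]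
  exact fun x hx => Real.mul_self_sqrt (hA.nonneg_of_mem_spectrum hx)

theorem PosSemidef.isHermitian_sqrt (hA : A.PosSemidef) : hA.sqrt.IsHermitian := by
  rw [hA.sqrt_eq_cfc]
  exact cfc_predicate _ A

theorem PosDef.inv_sqrt_eq_cfc (hA : A.PosDef) :
    (hA.posSemidef.sqrt)⁻¹ = cfc (fun x => (√x)⁻¹) A := by
  refine inv_eq_right_inv ?_
  rw [hA.posSemidef.sqrt_eq_cfc, ← cfc_mul _ _ A (hg := A.finite_real_spectrum.continuousOn _),
    cfc_congr (g := 1), cfc_one ℝ A hA.1.isSelfAdjoint]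
  exact fun x hx => mul_inv_cancel₀ (Real.sqrt_pos.2 (hA.pos_of_mem_spectrum hx)).ne'

end Sqrt

section Intertwining

variable {n m R S : Type*} [Fintype n] [Fintype m]

theorem pow_mul_eq_mul_pow_of_mul_eq_mul [DecidableEq n] [DecidableEq m] [CommSemiring S]
    {A : Matrix n n S} {B : Matrix m m S} {X : Matrix n m S} (h : A * X = X * B) (k : ℕ) :
    A ^ k * X = X * B ^ k := by
  induction k with
  | zero => simp
  | succ k ih =>
    rw [pow_succ, pow_succ, Matrix.mul_assoc, h, ← Matrix.mul_assoc, ih, Matrix.mul_assoc]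

open Polynomial in
theorem aeval_mul_eq_mul_aeval_of_mul_eq_mul [DecidableEq n] [DecidableEq m] [CommSemiring R]
    [CommSemiring S] [Algebra R S] {A : Matrix n n S} {B : Matrix m m S} {X : Matrix n m S}
    (h : A * X = X * B) (p : R[X]) : aeval A p * X = X * aeval B p := by
  induction p using Polynomial.induction_on' with
  | add p q hp hq => simp only [map_add, Matrix.add_mul, Matrix.mul_add, hp, hq]
  | monomial k c =>
    simp only [aeval_monomial, ← Algebra.smul_def, Matrix.smul_mul, Matrix.mul_smul,
      pow_mul_eq_mul_pow_of_mul_eq_mul h]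

variable [DecidableEq n] [DecidableEq m] {𝕜 : Type*} [RCLike 𝕜]
  {A : Matrix n n 𝕜} {B : Matrix m m 𝕜} {X : Matrix n m 𝕜}

theorem cfc_mul_eq_mul_cfc_of_mul_eq_mul (hA : A.IsHermitian) (hB : B.IsHermitian)
    (h : A * X = X * B) (f : ℝ → ℝ) : cfc f A * X = X * cfc f B := by
  classical
  set s := (A.finite_real_spectrum.union B.finite_real_spectrum).toFinset
  set p := Lagrange.interpolate s id f
  have hp : ∀ t ∈ s, p.eval t = f t := fun t ht =>
    Lagrange.eval_interpolate_at_node (v := id) f (Set.injOn_id _) ht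
  have hpA : cfc f A = Polynomial.aeval A p := by
    rw [← cfc_polynomial p A hA.isSelfAdjoint]
    exact cfc_congr fun t ht => (hp t (by simp [s, ht])).symm
  have hpB : cfc f B = Polynomial.aeval B p := by
    rw [← cfc_polynomial p B hB.isSelfAdjoint]
    exact cfc_congr fun t ht => (hp t (by simp [s, ht])).symm
  rw [hpA, hpB, aeval_mul_eq_mul_aeval_of_mul_eq_mul h]

open scoped ComplexOrder in
theorem PosDef.inv_sqrt_mul_eq_mul_inv_sqrt (hA : A.PosDef) (hB : B.PosDef)
    (h : A * X = X * B) : (hA.posSemidef.sqrt)⁻¹ * X = X * (hB.posSemidef.sqrt)⁻¹ := by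
  rw [hA.inv_sqrt_eq_cfc, hB.inv_sqrt_eq_cfc]
  exact cfc_mul_eq_mul_cfc_of_mul_eq_mul hA.1 hB.1 h _

end Intertwining

section SqrtPinv

variable {d M q R : Type*} [Fintype d] [Fintype M] [Fintype q]

theorem mul_mul_eq_of_mul_self_eq_mul_transpose [DecidableEq d] {E : Matrix d M ℝ}
    {S G : Matrix d d ℝ} (hSS : S * S = E * Eᵀ) (hG1 : S * G * S = S) : S * G * E = E := by
  have h : (S * G - 1) * (E * Eᴴ) = 0 := by
    rw [conjTranspose_eq_transpose_of_trivial, ← hSS, Matrix.sub_mul, ← Matrix.mul_assoc, hG1,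
      Matrix.one_mul, sub_self]
  rwa [mul_self_mul_conjTranspose_eq_zero, Matrix.sub_mul, Matrix.one_mul, sub_eq_zero] at h

theorem mul_mul_transpose_eq_of_mul_self_eq_mul_transpose [CommRing R] {E : Matrix d M R}
    {S G : Matrix d d R} (hSt : Sᵀ = S) (hSS : S * S = E * Eᵀ) (hG1 : S * G * S = S)
    (hG4 : (G * S)ᵀ = G * S) : G * (E * Eᵀ) = S := by
  have h := congrArg transpose hG1
  rw [Matrix.mul_assoc, transpose_mul, hG4, hSt] at h
  rw [← hSS, ← Matrix.mul_assoc, h]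

theorem one_add_mul_mul_eq_mul_mul_one_add [CommRing R] [DecidableEq d] [DecidableEq M]
    {E : Matrix d M R} {S G : Matrix d d R} (H : Matrix q d R) (W : Matrix q q R)
    (hSGE : S * G * E = E) (hGP : G * (E * Eᵀ) = S) :
    (1 + S * Hᵀ * W * H * S) * (G * E) = G * E * (1 + Eᵀ * Hᵀ * W * H * E) := by
  simp only [Matrix.add_mul, Matrix.mul_add, Matrix.one_mul, Matrix.mul_one]
  congr 1
  calc S * Hᵀ * W * H * S * (G * E) = S * Hᵀ * W * H * (S * G * E) := by
        simp only [Matrix.mul_assoc]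
    _ = G * (E * Eᵀ) * Hᵀ * W * H * E := by rw [hSGE, hGP]
    _ = G * E * (Eᵀ * Hᵀ * W * H * E) := by simp only [Matrix.mul_assoc]

end SqrtPinv

end Matrix

theorem stmt_6_general {d q M : ℕ} (E : Matrix (Fin d) (Fin M) ℝ)
    (H : Matrix (Fin q) (Fin d) ℝ) (R : Matrix (Fin q) (Fin q) ℝ)
    (P : Matrix (Fin d) (Fin d) ℝ) (hPE : P = E * Eᵀ) (hP : P.PosSemidef)
    -- `G` is the Moore–Penrose pseudo-inverse of `P^{1/2}`:
    (G : Matrix (Fin d) (Fin d) ℝ)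
    (hG1 : hP.sqrt * G * hP.sqrt = hP.sqrt)
    (hG4 : (G * hP.sqrt)ᵀ = G * hP.sqrt)
    -- positive definiteness of the matrices whose inverse square roots are taken:
    (h1 : (1 + hP.sqrt * Hᵀ * R⁻¹ * H * hP.sqrt).PosDef)
    (h2 : ((1 : Matrix (Fin M) (Fin M) ℝ) + Eᵀ * Hᵀ * R⁻¹ * H * E).PosDef)
    (A : Matrix (Fin d) (Fin d) ℝ) (hA : A = hP.sqrt * (h1.posSemidef.sqrt)⁻¹ * G)
    (T : Matrix (Fin M) (Fin M) ℝ) (hT : T = (h2.posSemidef.sqrt)⁻¹) :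
    A * E = E * T := by
  have hSt : (hP.sqrt)ᵀ = hP.sqrt := by
    simpa only [conjTranspose_eq_transpose_of_trivial] using hP.isHermitian_sqrt.eq
  have hSS : hP.sqrt * hP.sqrt = E * Eᵀ := hPE ▸ hP.sqrt_mul_self
  have hSGE : hP.sqrt * G * E = E := mul_mul_eq_of_mul_self_eq_mul_transpose hSS hG1
  have hGP : G * (E * Eᵀ) = hP.sqrt :=
    mul_mul_transpose_eq_of_mul_self_eq_mul_transpose hSt hSS hG1 hG4
  have hinv := h1.inv_sqrt_mul_eq_mul_inv_sqrt h2
    (one_add_mul_mul_eq_mul_mul_one_add H R⁻¹ hSGE hGP)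
  calc A * E = hP.sqrt * ((h1.posSemidef.sqrt)⁻¹ * (G * E)) := by
        simp only [hA, Matrix.mul_assoc]
    _ = hP.sqrt * G * E * T := by rw [hinv, hT]; simp only [Matrix.mul_assoc]
    _ = E * T := by rw [hSGE]

/-- Adjointness of the EAKF and ETKF transformations: with `P = E Eᵀ`,
`A = P^{1/2} (Id + P^{1/2} Hᵀ R⁻¹ H P^{1/2})^{-1/2} (P^{1/2})⁺` and
`T = (Id_M + Eᵀ Hᵀ R⁻¹ H E)^{-1/2}`, where `(P^{1/2})⁺` is the Moore–Penrose
pseudo-inverse of `P^{1/2}`, one has `A E = E T`. -/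
theorem stmt_6 {d q M : ℕ} (E : Matrix (Fin d) (Fin M) ℝ)
    (H : Matrix (Fin q) (Fin d) ℝ) (R : Matrix (Fin q) (Fin q) ℝ) (hR : R.PosDef)
    (P : Matrix (Fin d) (Fin d) ℝ) (hPE : P = E * Eᵀ) (hP : P.PosSemidef)
    -- `G` is the Moore–Penrose pseudo-inverse of `P^{1/2}`:
    (G : Matrix (Fin d) (Fin d) ℝ)
    (hG1 : hP.sqrt * G * hP.sqrt = hP.sqrt)
    (hG2 : G * hP.sqrt * G = G)
    (hG3 : (hP.sqrt * G)ᵀ = hP.sqrt * G)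
    (hG4 : (G * hP.sqrt)ᵀ = G * hP.sqrt)
    -- positive definiteness of the matrices whose inverse square roots are taken:
    (h1 : (1 + hP.sqrt * Hᵀ * R⁻¹ * H * hP.sqrt).PosDef)
    (h2 : ((1 : Matrix (Fin M) (Fin M) ℝ) + Eᵀ * Hᵀ * R⁻¹ * H * E).PosDef)
    (A : Matrix (Fin d) (Fin d) ℝ) (hA : A = hP.sqrt * (h1.posSemidef.sqrt)⁻¹ * G)
    (T : Matrix (Fin M) (Fin M) ℝ) (hT : T = (h2.posSemidef.sqrt)⁻¹) :
    A * E = E * T :=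
  stmt_6_general E H R P hPE hP G hG1 hG4 h1 h2 A hA T hT
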